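/- Let f : [a,b] → ℝ be four times continuously differentiable on (a,b) with its fourth derivative f⁗ bounded on (a,b), and set ‖f⁗‖_∞ = sup_{t∈(a,b)} |f⁗(t)|. Then |∫_a^b f(x) dx − ((b−a)/3)·[ (f(a)+f(b))/2 + 2·f((a+b)/2) ]| ≤ (1/2880)·‖f⁗‖_∞·(b−a)^5. -/

import Mathlib

/-!
Four integrations by parts write the error of Simpson's rule as `∫ t in a..b, K t * f⁗ t`
for the Peano kernel `K t = k (t - a)` on the left half of `[a, b]` and `K t = k (b - t)` on the
right half, where `k s = s³ (3 s - 2 (b - a)) / 72`. Since `K ≤ 0`, the error is bounded by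
`‖f⁗‖_∞ * ∫ |K| = ‖f⁗‖_∞ * (b - a)⁵ / 2880`.
-/

open MeasureTheory Real Set

theorem hasDerivAt_iteratedDerivWithin_Icc {f : ℝ → ℝ} {a b t : ℝ} {n k : ℕ}
    (hf : ContDiffOn ℝ n f (Icc a b)) (hk : k < n) (ht : t ∈ Ioo a b) :
    HasDerivAt (iteratedDerivWithin k f (Icc a b))
      (iteratedDerivWithin (k + 1) f (Icc a b) t) t := by
  have hab : a < b := ht.1.trans ht.2
  rw [iteratedDerivWithin_succ]
  exact ((hf.differentiableOn_iteratedDerivWithin (mod_cast hk) (uniqueDiffOn_Icc hab)) t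
    (Ioo_subset_Icc_self ht)).hasDerivWithinAt.hasDerivAt (Icc_mem_nhds ht.1 ht.2)

theorem integral_mul_iteratedDerivWithin_succ {f P P' : ℝ → ℝ} {a b c d : ℝ} {n k : ℕ}
    (hab : a < b) (hac : a ≤ c) (hcd : c ≤ d) (hdb : d ≤ b)
    (hf : ContDiffOn ℝ n f (Icc a b)) (hk : k < n)
    (hP : ∀ t, HasDerivAt P (P' t) t) (hP' : Continuous P') :
    ∫ t in c..d, P t * iteratedDerivWithin (k + 1) f (Icc a b) t =
      P d * iteratedDerivWithin k f (Icc a b) d - P c * iteratedDerivWithin k f (Icc a b) c -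
        ∫ t in c..d, P' t * iteratedDerivWithin k f (Icc a b) t := by
  have hsub : uIcc c d ⊆ Icc a b := by rw [uIcc_of_le hcd]; exact Icc_subset_Icc hac hdb
  have hD : ∀ j : ℕ, j ≤ n → ContinuousOn (iteratedDerivWithin j f (Icc a b)) (uIcc c d) :=
    fun j hj => (hf.continuousOn_iteratedDerivWithin (mod_cast hj) (uniqueDiffOn_Icc hab)).mono hsub
  refine intervalIntegral.integral_mul_deriv_eq_deriv_mul_of_hasDerivAt
    (fun t _ => (hP t).continuousAt.continuousWithinAt) (hD k hk.le) (fun t _ => hP t) ?_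
    (hP'.intervalIntegrable _ _) ((hD (k + 1) hk).intervalIntegrable)
  rw [min_eq_left hcd, max_eq_right hcd]
  exact fun t ht => hasDerivAt_iteratedDerivWithin_Icc hf hk
    ⟨hac.trans_lt ht.1, ht.2.trans_le hdb⟩

theorem integral_mul_iteratedDerivWithin {f : ℝ → ℝ} {a b c d : ℝ}
    (hab : a < b) (hac : a ≤ c) (hcd : c ≤ d) (hdb : d ≤ b)
    (n : ℕ) (hf : ContDiffOn ℝ n f (Icc a b))
    (P : ℕ → ℝ → ℝ) (hP : ∀ j < n, ∀ t, HasDerivAt (P j) (P (j + 1) t) t)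
    (hPn : Continuous (P n)) :
    ∫ t in c..d, P 0 t * iteratedDerivWithin n f (Icc a b) t =
      ∑ j ∈ Finset.range n, (-1) ^ j *
          (P j d * iteratedDerivWithin (n - 1 - j) f (Icc a b) d -
            P j c * iteratedDerivWithin (n - 1 - j) f (Icc a b) c) +
        (-1) ^ n * ∫ t in c..d, P n t * f t := by
  induction n generalizing P with
  | zero => simp
  | succ n ih =>
    have hP1 : Continuous (P 1) := by
      rcases Nat.eq_zero_or_pos n with rfl | hn
      · exact hPn
      · exact continuous_iff_continuousAt.2 fun t => (hP 1 (by omega) t).continuousAt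
    rw [integral_mul_iteratedDerivWithin_succ hab hac hcd hdb hf n.lt_succ_self
        (hP 0 n.succ_pos) hP1,
      ih hf.of_succ (fun j => P (j + 1)) (fun j hj => hP (j + 1) (by omega)) hPn,
      Finset.sum_range_succ']
    simp only [Nat.add_sub_cancel, Nat.sub_zero, Nat.sub_sub, Nat.add_comm 1, pow_succ,
      mul_neg_one, neg_mul, pow_zero, one_mul, Finset.sum_neg_distrib]
    ring

/-- `simpsonKernel L j` is the `j`-th derivative of `s ↦ (3 s⁴ - 2 L s³) / 72`, the Peano
kernel of Simpson's rule on an interval of length `L` as a function of the distance `s` to the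
nearer endpoint. -/
noncomputable def simpsonKernel (L : ℝ) : ℕ → ℝ → ℝ
  | 0, s => (3 * s ^ 4 - 2 * L * s ^ 3) / 72
  | 1, s => (2 * s ^ 3 - L * s ^ 2) / 12
  | 2, s => (3 * s ^ 2 - L * s) / 6
  | 3, s => s - L / 6
  | 4, _ => 1
  | _, _ => 0

theorem hasDerivAt_simpsonKernel (L : ℝ) (j : ℕ) (s : ℝ) :
    HasDerivAt (simpsonKernel L j) (simpsonKernel L (j + 1) s) s := by
  match j with
  | 0 =>
    exact (((hasDerivAt_pow 4 s).const_mul 3).sub ((hasDerivAt_pow 3 s).const_mul (2 * L))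
      |>.div_const 72).congr_deriv (by simp only [simpsonKernel]; ring)
  | 1 =>
    exact (((hasDerivAt_pow 3 s).const_mul 2).sub ((hasDerivAt_pow 2 s).const_mul L)
      |>.div_const 12).congr_deriv (by simp only [simpsonKernel]; ring)
  | 2 =>
    exact (((hasDerivAt_pow 2 s).const_mul 3).sub ((hasDerivAt_id s).const_mul L)
      |>.div_const 6).congr_deriv (by simp only [simpsonKernel]; ring)
  | 3 => exact (hasDerivAt_id s).sub_const (L / 6)
  | 4 => exact hasDerivAt_const s 1
  | _ + 5 => exact hasDerivAt_const s 0

theorem continuous_simpsonKernel (L : ℝ) (j : ℕ) : Continuous (simpsonKernel L j) :=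
  continuous_iff_continuousAt.2 fun s => (hasDerivAt_simpsonKernel L j s).continuousAt

theorem integral_abs_simpsonKernel {L : ℝ} (hL : 0 ≤ L) :
    ∫ s in 0..L / 2, |simpsonKernel L 0 s| = L ^ 5 / 5760 := by
  have hneg : ∀ s ∈ uIcc 0 (L / 2), |simpsonKernel L 0 s| = -simpsonKernel L 0 s := by
    intro s hs
    rw [uIcc_of_le (by positivity)] at hs
    have hfactor : simpsonKernel L 0 s = s ^ 3 * (3 * s - 2 * L) / 72 := by
      simp only [simpsonKernel]; ring
    refine abs_of_nonpos (hfactor ▸ div_nonpos_of_nonpos_of_nonneg ?_ (by norm_num))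
    exact mul_nonpos_of_nonneg_of_nonpos (pow_nonneg hs.1 3) (by linarith [hs.2])
  rw [intervalIntegral.integral_congr hneg]
  simp only [simpsonKernel, intervalIntegral.integral_neg, intervalIntegral.integral_div,
    intervalIntegral.integral_sub, intervalIntegral.integral_const_mul, integral_pow,
    intervalIntegral.intervalIntegrable_pow, IntervalIntegrable.const_mul]
  ring

theorem simpson_error_eq_integral_simpsonKernel {f : ℝ → ℝ} {a b : ℝ} (hab : a < b)
    (hf : ContDiffOn ℝ 4 f (Icc a b)) :
    (∫ x in a..b, f x) - (b - a) / 3 * ((f a + f b) / 2 + 2 * f ((a + b) / 2)) =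
      (∫ t in a..(a + b) / 2,
          simpsonKernel (b - a) 0 (t - a) * iteratedDerivWithin 4 f (Icc a b) t) +
        ∫ t in (a + b) / 2..b,
          simpsonKernel (b - a) 0 (b - t) * iteratedDerivWithin 4 f (Icc a b) t := by
  have ham : a ≤ (a + b) / 2 := by linarith
  have hmb : (a + b) / 2 ≤ b := by linarith
  have hleft := integral_mul_iteratedDerivWithin hab le_rfl ham hmb 4 hf
    (fun j t => simpsonKernel (b - a) j (t - a))
    (fun j _ t => (hasDerivAt_simpsonKernel _ j _).comp_sub_const t a)
    ((continuous_simpsonKernel _ 4).comp (continuous_sub_right a))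
  have hright := integral_mul_iteratedDerivWithin hab ham hmb le_rfl 4 hf
    (fun j t => (-1) ^ j * simpsonKernel (b - a) j (b - t))
    (fun j _ t => (((hasDerivAt_simpsonKernel _ j _).comp_const_sub b t).const_mul _).congr_deriv
      (by ring))
    (continuous_const.mul ((continuous_simpsonKernel _ 4).comp (continuous_sub_left b)))
  have hsplit := intervalIntegral.integral_add_adjacent_intervals (μ := volume)
    ((hf.continuousOn.mono (Icc_subset_Icc le_rfl hmb)).intervalIntegrable_of_Icc ham)
    ((hf.continuousOn.mono (Icc_subset_Icc ham le_rfl)).intervalIntegrable_of_Icc hmb)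
  simp only [pow_zero, one_mul] at hright
  rw [hleft, hright, ← hsplit]
  simp only [Finset.sum_range_succ, Finset.sum_range_zero, Nat.reduceSub, simpsonKernel,
    iteratedDerivWithin_zero, (by norm_num : (-1 : ℝ) ^ 4 = 1), one_mul]
  ring

theorem abs_integral_mul_le_of_abs_le {P g : ℝ → ℝ} {c d M : ℝ} (hcd : c ≤ d)
    (hP : IntervalIntegrable P volume c d) (hg : ∀ t ∈ Ioo c d, |g t| ≤ M) :
    |∫ t in c..d, P t * g t| ≤ M * ∫ t in c..d, |P t| := by
  have hbound : ∀ᵐ t, t ∈ Ioc c d → ‖P t * g t‖ ≤ |P t| * M := by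
    filter_upwards [(Ioo_ae_eq_Ioc (μ := volume) (a := c) (b := d)).mem_iff] with t hIoo hIoc
    rw [Real.norm_eq_abs, abs_mul]
    exact mul_le_mul_of_nonneg_left (hg t (hIoo.2 hIoc)) (abs_nonneg _)
  have := intervalIntegral.norm_integral_le_of_norm_le hcd hbound (hP.abs.mul_const M)
  rwa [intervalIntegral.integral_mul_const, mul_comm, Real.norm_eq_abs] at this

theorem abs_integral_simpsonKernel_mul_le_left {g : ℝ → ℝ} {a b M : ℝ} (hab : a ≤ b)
    (hg : ∀ t ∈ Ioo a ((a + b) / 2), |g t| ≤ M) :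
    |∫ t in a..(a + b) / 2, simpsonKernel (b - a) 0 (t - a) * g t| ≤
      M * ((b - a) ^ 5 / 5760) := by
  calc _ ≤ M * ∫ t in a..(a + b) / 2, |simpsonKernel (b - a) 0 (t - a)| :=
        abs_integral_mul_le_of_abs_le (by linarith)
          (((continuous_simpsonKernel _ 0).comp (continuous_sub_right a)).intervalIntegrable _ _) hg
    _ = M * ((b - a) ^ 5 / 5760) := by
      rw [intervalIntegral.integral_comp_sub_right (fun s => |simpsonKernel (b - a) 0 s|),
        sub_self, show (a + b) / 2 - a = (b - a) / 2 by ring,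
        integral_abs_simpsonKernel (sub_nonneg.2 hab)]

theorem abs_integral_simpsonKernel_mul_le_right {g : ℝ → ℝ} {a b M : ℝ} (hab : a ≤ b)
    (hg : ∀ t ∈ Ioo ((a + b) / 2) b, |g t| ≤ M) :
    |∫ t in (a + b) / 2..b, simpsonKernel (b - a) 0 (b - t) * g t| ≤
      M * ((b - a) ^ 5 / 5760) := by
  calc _ ≤ M * ∫ t in (a + b) / 2..b, |simpsonKernel (b - a) 0 (b - t)| :=
        abs_integral_mul_le_of_abs_le (by linarith)
          (((continuous_simpsonKernel _ 0).comp (continuous_sub_left b)).intervalIntegrable _ _) hg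
    _ = M * ((b - a) ^ 5 / 5760) := by
      rw [intervalIntegral.integral_comp_sub_left (fun s => |simpsonKernel (b - a) 0 s|),
        sub_self, show b - (a + b) / 2 = (b - a) / 2 by ring,
        integral_abs_simpsonKernel (sub_nonneg.2 hab)]

theorem classical_simpson_inequality (f : ℝ → ℝ) (a b : ℝ) (hab : a < b)
    (hf : ContDiffOn ℝ 4 f (Set.Icc a b))
    (hbdd : BddAbove
      ((fun t => |iteratedDerivWithin 4 f (Set.Icc a b) t|) '' Set.Ioo a b)) :
    |(∫ x in a..b, f x) -
        (b - a) / 3 * ((f a + f b) / 2 + 2 * f ((a + b) / 2))| ≤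
      1 / 2880 *
        sSup ((fun t => |iteratedDerivWithin 4 f (Set.Icc a b) t|) '' Set.Ioo a b) *
        (b - a) ^ 5 := by
  set M := sSup ((fun t => |iteratedDerivWithin 4 f (Set.Icc a b) t|) '' Set.Ioo a b)
  have hM : ∀ t ∈ Ioo a b, |iteratedDerivWithin 4 f (Icc a b) t| ≤ M :=
    fun t ht => le_csSup hbdd (mem_image_of_mem _ ht)
  rw [simpson_error_eq_integral_simpsonKernel hab hf]
  have hleft := abs_integral_simpsonKernel_mul_le_left hab.le
    fun t ht => hM t ⟨ht.1, by linarith [ht.2]⟩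
  have hright := abs_integral_simpsonKernel_mul_le_right hab.le
    fun t ht => hM t ⟨by linarith [ht.1], ht.2⟩
  calc _ ≤ _ := abs_add_le _ _
    _ ≤ _ := add_le_add hleft hright
    _ = _ := by ring
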